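/- arXiv:1310.0414 — 8 statements merged into one kernel-verified Lean document; each statement's English description precedes it below -/
import Mathlib

section
/- There do not exist positive coprime integers α and β such that 2(α+β)²/(α+2β) is an integer. -/
/-- There do not exist positive coprime integers α and β such that
`2(α+β)²/(α+2β)` is an integer. -/
theorem stmt_0 :
    ¬ ∃ α β : ℕ, 0 < α ∧ 0 < β ∧ Nat.gcd α β = 1 ∧ (α + 2 * β) ∣ 2 * (α + β) ^ 2 := by
  rintro ⟨α, β, hα, hβ, hco, hdvd⟩
  have key : 2 * (α + β) ^ 2 = (α + 2 * β) * (2 * α) + 2 * β ^ 2 := by ring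
  have h1 : (α + 2 * β) ∣ 2 * β ^ 2 := by
    have := (Nat.dvd_sub hdvd (Dvd.intro (2 * α) rfl))
    simpa [key] using this
  have hcop : Nat.Coprime (α + 2 * β) (β ^ 2) :=
    (((Nat.coprime_add_mul_right_left α β 2).mpr hco).pow_right 2)
  have h2 : (α + 2 * β) ∣ 2 := hcop.dvd_of_dvd_mul_right h1
  have := Nat.le_of_dvd (by norm_num) h2
  omega
end

section
/- There do not exist positive integers α₁', α₂', α₃', pairwise coprime, with α₂' and α₃' odd, such that 2α₁'α₂' + α₁'α₃' + α₂'α₃' = (α₁')² + (α₂')² + (α₃')². -/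
/-- There do not exist positive pairwise coprime integers α₁', α₂', α₃' with α₂', α₃' odd
such that `2α₁'α₂' + α₁'α₃' + α₂'α₃' = α₁'² + α₂'² + α₃'²`. -/
theorem stmt_5 :
    ¬ ∃ a b c : ℕ, 0 < a ∧ 0 < b ∧ 0 < c ∧
      Nat.Coprime a b ∧ Nat.Coprime a c ∧ Nat.Coprime b c ∧
      Odd b ∧ Odd c ∧
      2 * a * b + a * c + b * c = a ^ 2 + b ^ 2 + c ^ 2 := by
  rintro ⟨a, b, c, _, _, _, _, _, _, ⟨k, hk⟩, ⟨m, hm⟩, h⟩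
  subst hk hm
  rcases Nat.even_or_odd a with ⟨x, hx⟩ | ⟨x, hx⟩ <;> subst hx <;> ring_nf at h <;> omega
end

section
/- Let α₁, α₂, α₃ be positive pairwise distinct integers with gcd(α₁,α₂,α₃)=1, and write gᵢⱼ = gcd(αᵢ,αⱼ). Set γ₀ = e₂/(e₁e₂-e₃) and 12(e₁e₂-e₃)γ₂ = -2e₂ + e₂(g₁₂² + g₁₃² + g₂₃²) + g₁₂²α₃² + g₁₃²α₂² + g₂₃²α₁². If γ₀/γ₂ ≥ 3, then g₁₂ = g₁₃ = g₂₃ = 1, i.e., the weights are pairwise coprime. -/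
/-!
Write `N = 12 (e₁e₂ - e₃) γ₂` for the right-hand side of the defining identity of `γ₂`.
Since `e₁e₂ - e₃ = (α₁ + α₂)(α₁ + α₃)(α₂ + α₃) > 0`, the condition `γ₀ ≥ 3γ₂` (with `γ₂ > 0`)
amounts to `N ≤ 4e₂`. If some `gᵢⱼ ≥ 2`, then `∑ gᵢⱼ² ≥ 4 + 1 + 1`, so already the term
`e₂ (∑ gᵢⱼ² - 2)` of `N` is at least `4e₂`, and the remaining terms `gᵢⱼ² αₖ²` make `N > 4e₂`.
-/

section OrderedField

variable {K : Type*} [Field K] [LinearOrder K] [IsStrictOrderedRing K]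

theorem e₁_mul_e₂_sub_e₃_pos {a b c : K} (ha : 0 < a) (hb : 0 < b) (hc : 0 < c) :
    0 < (a + b + c) * (a * b + a * c + b * c) - a * b * c := by
  have hfactor : (a + b + c) * (a * b + a * c + b * c) - a * b * c
      = (a + b) * (a + c) * (b + c) := by ring
  rw [hfactor]
  positivity

theorem four_mul_lt_of_six_le_add {e₂ a b c p q r : K} (he₂ : 0 ≤ e₂)
    (hp : 0 < p) (hq : 0 ≤ q) (hr : 0 ≤ r) (hc : c ≠ 0) (hpqr : 6 ≤ p + q + r) :
    4 * e₂ < -2 * e₂ + e₂ * (p + q + r) + p * c ^ 2 + q * b ^ 2 + r * a ^ 2 := by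
  have hpc : 0 < p * c ^ 2 := by positivity
  nlinarith [mul_le_mul_of_nonneg_left hpqr he₂, mul_nonneg hq (sq_nonneg b),
    mul_nonneg hr (sq_nonneg a)]

theorem le_four_mul_of_three_le_div {e₂ D γ₀ γ₂ N : K} (hD : 0 < D) (hN : 0 < N)
    (hγ₀ : γ₀ = e₂ / D) (hγ₂ : 12 * D * γ₂ = N) (hr : 3 ≤ γ₀ / γ₂) :
    N ≤ 4 * e₂ := by
  have hγ₂pos : 0 < γ₂ := pos_of_mul_pos_right (hγ₂ ▸ hN) (by positivity)
  have h3 : 3 * γ₂ ≤ γ₀ := (le_div_iff₀ hγ₂pos).mp hr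
  have hγ₀D : γ₀ * D = e₂ := by rw [hγ₀]; exact div_mul_cancel₀ _ hD.ne'
  calc N = 4 * (3 * γ₂) * D := by rw [← hγ₂]; ring
    _ ≤ 4 * γ₀ * D := by gcongr
    _ = 4 * e₂ := by rw [mul_assoc, hγ₀D]

end OrderedField

theorem six_le_sq_add_sq_add_sq {x y z : ℕ} (hx : 1 ≤ x) (hy : 1 ≤ y) (hz : 1 ≤ z)
    (hne : ¬(x = 1 ∧ y = 1 ∧ z = 1)) : 6 ≤ x ^ 2 + y ^ 2 + z ^ 2 := by
  by_contra hlt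
  exact hne ⟨by nlinarith, by nlinarith, by nlinarith⟩

theorem stmt_6_general (α₁ α₂ α₃ : ℕ) (h₁ : 0 < α₁) (h₂ : 0 < α₂) (h₃ : 0 < α₃)
    (e₁ e₂ e₃ : ℚ) (he₁ : e₁ = α₁ + α₂ + α₃) (he₂ : e₂ = α₁ * α₂ + α₁ * α₃ + α₂ * α₃)
    (he₃ : e₃ = α₁ * α₂ * α₃)
    (g₁₂ g₁₃ g₂₃ : ℕ) (hg₁₂ : g₁₂ = Nat.gcd α₁ α₂) (hg₁₃ : g₁₃ = Nat.gcd α₁ α₃)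
    (hg₂₃ : g₂₃ = Nat.gcd α₂ α₃)
    (γ₀ γ₂ : ℚ) (hγ₀ : γ₀ = e₂ / (e₁ * e₂ - e₃))
    (hγ₂ : 12 * (e₁ * e₂ - e₃) * γ₂ =
      -2 * e₂ + e₂ * ((g₁₂ : ℚ) ^ 2 + (g₁₃ : ℚ) ^ 2 + (g₂₃ : ℚ) ^ 2)
        + (g₁₂ : ℚ) ^ 2 * (α₃ : ℚ) ^ 2 + (g₁₃ : ℚ) ^ 2 * (α₂ : ℚ) ^ 2
        + (g₂₃ : ℚ) ^ 2 * (α₁ : ℚ) ^ 2)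
    (hr : 3 ≤ γ₀ / γ₂) :
    g₁₂ = 1 ∧ g₁₃ = 1 ∧ g₂₃ = 1 := by
  have hg₁₂pos : 1 ≤ g₁₂ := hg₁₂ ▸ Nat.gcd_pos_of_pos_left _ h₁
  have hg₁₃pos : 1 ≤ g₁₃ := hg₁₃ ▸ Nat.gcd_pos_of_pos_left _ h₁
  have hg₂₃pos : 1 ≤ g₂₃ := hg₂₃ ▸ Nat.gcd_pos_of_pos_left _ h₂
  by_contra hne
  have hsum : (6 : ℚ) ≤ (g₁₂ : ℚ) ^ 2 + (g₁₃ : ℚ) ^ 2 + (g₂₃ : ℚ) ^ 2 := by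
    exact_mod_cast six_le_sq_add_sq_add_sq hg₁₂pos hg₁₃pos hg₂₃pos hne
  have he₂pos : 0 < e₂ := by rw [he₂]; positivity
  have hD : 0 < e₁ * e₂ - e₃ := by
    rw [he₁, he₂, he₃]; exact e₁_mul_e₂_sub_e₃_pos (by positivity) (by positivity) (by positivity)
  have hlt := four_mul_lt_of_six_le_add (a := (α₁ : ℚ)) (b := α₂) he₂pos.le
    (by positivity) (by positivity) (by positivity) (by positivity : (α₃ : ℚ) ≠ 0) hsum
  have hle := le_four_mul_of_three_le_div hD (by linarith) hγ₀ hγ₂ hr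
  linarith

/-- If the ratio γ₀/γ₂ of the first two nonzero Laurent coefficients of the on-shell
Hilbert series of a generic effective circle action on ℂ³ is at least 3, then the
weights are pairwise coprime. -/
theorem stmt_6 (α₁ α₂ α₃ : ℕ) (h₁ : 0 < α₁) (h₂ : 0 < α₂) (h₃ : 0 < α₃)
    (hne₁₂ : α₁ ≠ α₂) (hne₁₃ : α₁ ≠ α₃) (hne₂₃ : α₂ ≠ α₃)
    (hgcd : Nat.gcd (Nat.gcd α₁ α₂) α₃ = 1)
    (e₁ e₂ e₃ : ℚ) (he₁ : e₁ = α₁ + α₂ + α₃) (he₂ : e₂ = α₁ * α₂ + α₁ * α₃ + α₂ * α₃)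
    (he₃ : e₃ = α₁ * α₂ * α₃)
    (g₁₂ g₁₃ g₂₃ : ℕ) (hg₁₂ : g₁₂ = Nat.gcd α₁ α₂) (hg₁₃ : g₁₃ = Nat.gcd α₁ α₃)
    (hg₂₃ : g₂₃ = Nat.gcd α₂ α₃)
    (γ₀ γ₂ : ℚ) (hγ₀ : γ₀ = e₂ / (e₁ * e₂ - e₃))
    (hγ₂ : 12 * (e₁ * e₂ - e₃) * γ₂ =
      -2 * e₂ + e₂ * ((g₁₂ : ℚ) ^ 2 + (g₁₃ : ℚ) ^ 2 + (g₂₃ : ℚ) ^ 2)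
        + (g₁₂ : ℚ) ^ 2 * (α₃ : ℚ) ^ 2 + (g₁₃ : ℚ) ^ 2 * (α₂ : ℚ) ^ 2
        + (g₂₃ : ℚ) ^ 2 * (α₁ : ℚ) ^ 2)
    (hr : 3 ≤ γ₀ / γ₂) :
    g₁₂ = 1 ∧ g₁₃ = 1 ∧ g₂₃ = 1 :=
  stmt_6_general α₁ α₂ α₃ h₁ h₂ h₃ e₁ e₂ e₃ he₁ he₂ he₃ g₁₂ g₁₃ g₂₃ hg₁₂ hg₁₃ hg₂₃ γ₀ γ₂ hγ₀ hγ₂ hr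
end

section
/- Let α₁, α₂, α₃ be positive integers with gcd(α₁,α₂,α₃)=1, gcd(α₁,α₂)=1, gcd(α₁,α₃)>1. Set α₁'=α₁/gcd(α₁,α₃), α₂'=α₂/gcd(α₂,α₃), α₃'=α₃/(gcd(α₁,α₃)gcd(α₂,α₃)), and κ = α₁'α₂' + α₁'α₃'·gcd(α₁,α₃) + α₂'α₃'·gcd(α₂,α₃). Then κ does not divide (α₂')²·gcd(α₂,α₃); in particular gcd(α₁,α₃) + (α₂)²·gcd(α₁,α₃)/(α₁α₂+α₁α₃+α₂α₃) is never an integer. -/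
/-- With weights as in the Type I elimination (one primitive pseudoreflection),
κ does not divide `(α₂')²·gcd(α₂,α₃)`; in particular
`gcd(α₁,α₃) + α₂²·gcd(α₁,α₃)/(α₁α₂+α₁α₃+α₂α₃)` is never an integer. -/
theorem stmt_7 (α₁ α₂ α₃ : ℕ) (h₁ : 0 < α₁) (h₂ : 0 < α₂) (h₃ : 0 < α₃)
    (hgcd : Nat.gcd (Nat.gcd α₁ α₂) α₃ = 1)
    (h₁₂ : Nat.gcd α₁ α₂ = 1) (h₁₃ : 1 < Nat.gcd α₁ α₃)
    (a₁' a₂' a₃' κ : ℕ)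
    (ha₁' : a₁' = α₁ / Nat.gcd α₁ α₃) (ha₂' : a₂' = α₂ / Nat.gcd α₂ α₃)
    (ha₃' : a₃' = α₃ / (Nat.gcd α₁ α₃ * Nat.gcd α₂ α₃))
    (hκ : κ = a₁' * a₂' + a₁' * a₃' * Nat.gcd α₁ α₃ + a₂' * a₃' * Nat.gcd α₂ α₃) :
    ¬ κ ∣ a₂' ^ 2 * Nat.gcd α₂ α₃ ∧
    ¬ (α₁ * α₂ + α₁ * α₃ + α₂ * α₃) ∣ α₂ ^ 2 * Nat.gcd α₁ α₃ := by
  set d₁ := Nat.gcd α₁ α₃ with hd₁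
  set d₂ := Nat.gcd α₂ α₃ with hd₂
  have hd₁α₁ : d₁ ∣ α₁ := Nat.gcd_dvd_left _ _
  have hd₁α₃ : d₁ ∣ α₃ := Nat.gcd_dvd_right _ _
  have hd₂α₂ : d₂ ∣ α₂ := Nat.gcd_dvd_left _ _
  have hd₂α₃ : d₂ ∣ α₃ := Nat.gcd_dvd_right _ _
  have hd₁pos : 0 < d₁ := lt_trans one_pos h₁₃
  have hd₂pos : 0 < d₂ := Nat.gcd_pos_of_pos_left _ h₂
  -- d₁ and d₂ are coprime
  have hcd : Nat.Coprime d₁ d₂ := by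
    have : Nat.gcd d₁ d₂ ∣ Nat.gcd α₁ α₂ :=
      Nat.dvd_gcd ((Nat.gcd_dvd_left _ _).trans hd₁α₁) ((Nat.gcd_dvd_right _ _).trans hd₂α₂)
    exact Nat.eq_one_of_dvd_one (h₁₂ ▸ this)
  have hd₁₂α₃ : d₁ * d₂ ∣ α₃ := hcd.mul_dvd_of_dvd_of_dvd hd₁α₃ hd₂α₃
  have e₁ : α₁ = a₁' * d₁ := by rw [ha₁', Nat.div_mul_cancel hd₁α₁]
  have e₂ : α₂ = a₂' * d₂ := by rw [ha₂', Nat.div_mul_cancel hd₂α₂]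
  have e₃ : α₃ = a₃' * (d₁ * d₂) := by rw [ha₃', Nat.div_mul_cancel hd₁₂α₃]
  have ha₁pos : 0 < a₁' := by
    rcases Nat.eq_zero_or_pos a₁' with h | h
    · rw [h, zero_mul] at e₁; omega
    · exact h
  have ha₂pos : 0 < a₂' := by
    rcases Nat.eq_zero_or_pos a₂' with h | h
    · rw [h, zero_mul] at e₂; omega
    · exact h
  have ha₃pos : 0 < a₃' := by
    rcases Nat.eq_zero_or_pos a₃' with h | h
    · rw [h, zero_mul] at e₃; omega
    · exact h
  -- gcd a₂' (a₃' * d₁) = 1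
  have hkey : Nat.Coprime a₂' (a₃' * d₁) := by
    have : Nat.gcd (a₂' * d₂) (a₃' * d₁ * d₂) = d₂ := by
      rw [← e₂, show a₃' * d₁ * d₂ = a₃' * (d₁ * d₂) by ring, ← e₃]
    rw [Nat.gcd_mul_right] at this
    have : Nat.gcd a₂' (a₃' * d₁) * d₂ = 1 * d₂ := by rw [this, one_mul]
    exact Nat.eq_of_mul_eq_mul_right hd₂pos this
  -- a₂' coprime to a₁'
  have hc21 : Nat.Coprime a₂' a₁' :=
    Nat.Coprime.coprime_dvd_left ⟨d₂, e₂⟩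
      (Nat.Coprime.coprime_dvd_right ⟨d₁, e₁⟩ (Nat.coprime_comm.mp h₁₂))
  -- κ coprime to a₂'
  have hcκ : Nat.Coprime κ a₂' := by
    have hκ' : κ = a₁' * (a₃' * d₁) + (a₁' + a₃' * d₂) * a₂' := by rw [hκ]; ring
    have : Nat.gcd a₂' κ = Nat.gcd a₂' (a₁' * (a₃' * d₁)) := by
      rw [hκ']; exact Nat.gcd_add_mul_right_right a₂' _ _
    have hc : Nat.Coprime a₂' (a₁' * (a₃' * d₁)) := Nat.Coprime.mul_right hc21 hkey
    exact Nat.coprime_comm.mp (by rw [Nat.Coprime, this]; exact hc)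
  have first : ¬ κ ∣ a₂' ^ 2 * d₂ := by
    intro hdvd
    have : κ ∣ d₂ := (Nat.Coprime.pow_right 2 hcκ).dvd_of_dvd_mul_left hdvd
    have hle : κ ≤ d₂ := Nat.le_of_dvd hd₂pos this
    have h6 : d₂ ≤ a₂' * a₃' * d₂ :=
      Nat.le_mul_of_pos_left d₂ (Nat.mul_pos ha₂pos ha₃pos)
    have h7 : 0 < a₁' * a₃' * d₁ := by positivity
    omega
  refine ⟨first, ?_⟩
  intro hdvd
  apply first
  have heq : α₁ * α₂ + α₁ * α₃ + α₂ * α₃ = d₁ * d₂ * κ := by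
    rw [e₁, e₂, e₃, hκ]; ring
  have heq2 : α₂ ^ 2 * d₁ = d₁ * d₂ * (a₂' ^ 2 * d₂) := by rw [e₂]; ring
  rw [heq, heq2] at hdvd
  exact (mul_dvd_mul_iff_left (by positivity : d₁ * d₂ ≠ 0)).mp hdvd
end

section
/- Let α₁, α₂, α₃ be positive integers with gcd(α₁,α₂,α₃)=1, gcd(α₁,α₂)>1 and gcd(α₁,α₃)>1. Define αⱼ' by dividing each αⱼ by the product of its gcds with the other two, and κ = α₁'α₂'·gcd(α₁,α₂) + α₁'α₃'·gcd(α₁,α₃) + α₂'α₃'·gcd(α₂,α₃). Then it is impossible that both (α₁+α₂)(α₂+α₃)gcd(α₁,α₃)/(α₁α₂+α₁α₃+α₂α₃) and (α₁+α₃)(α₂+α₃)gcd(α₁,α₂)/(α₁α₂+α₁α₃+α₂α₃) are integers. -/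
/-- Type I elimination with two primitive pseudoreflections: it is impossible that both
`(α₁+α₂)(α₂+α₃)gcd(α₁,α₃)/(α₁α₂+α₁α₃+α₂α₃)` and
`(α₁+α₃)(α₂+α₃)gcd(α₁,α₂)/(α₁α₂+α₁α₃+α₂α₃)` are integers. -/
theorem stmt_8 (α₁ α₂ α₃ : ℕ) (h₁ : 0 < α₁) (h₂ : 0 < α₂) (h₃ : 0 < α₃)
    (hgcd : Nat.gcd (Nat.gcd α₁ α₂) α₃ = 1)
    (h₁₂ : 1 < Nat.gcd α₁ α₂) (h₁₃ : 1 < Nat.gcd α₁ α₃)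
    (a₁' a₂' a₃' κ : ℕ)
    (ha₁' : a₁' = α₁ / (Nat.gcd α₁ α₂ * Nat.gcd α₁ α₃))
    (ha₂' : a₂' = α₂ / (Nat.gcd α₁ α₂ * Nat.gcd α₂ α₃))
    (ha₃' : a₃' = α₃ / (Nat.gcd α₁ α₃ * Nat.gcd α₂ α₃))
    (hκ : κ = a₁' * a₂' * Nat.gcd α₁ α₂ + a₁' * a₃' * Nat.gcd α₁ α₃
      + a₂' * a₃' * Nat.gcd α₂ α₃) :
    ¬ ((α₁ * α₂ + α₁ * α₃ + α₂ * α₃) ∣ (α₁ + α₂) * (α₂ + α₃) * Nat.gcd α₁ α₃ ∧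
       (α₁ * α₂ + α₁ * α₃ + α₂ * α₃) ∣ (α₁ + α₃) * (α₂ + α₃) * Nat.gcd α₁ α₂) := by
  rintro ⟨hA, hB⟩
  set d12 := Nat.gcd α₁ α₂ with hd12
  set d13 := Nat.gcd α₁ α₃ with hd13
  set d23 := Nat.gcd α₂ α₃ with hd23
  have hc12_3 : Nat.Coprime d12 α₃ := hgcd
  have hc1213 : Nat.Coprime d12 d13 :=
    Nat.Coprime.coprime_dvd_right (Nat.gcd_dvd_right α₁ α₃) hc12_3
  have hc1223 : Nat.Coprime d12 d23 :=
    Nat.Coprime.coprime_dvd_right (Nat.gcd_dvd_right α₂ α₃) hc12_3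
  have hc1323 : Nat.Coprime d13 d23 := by
    have hdvd : Nat.gcd d13 d23 ∣ Nat.gcd d12 d13 :=
      Nat.dvd_gcd
        (Nat.dvd_gcd ((Nat.gcd_dvd_left d13 d23).trans (Nat.gcd_dvd_left α₁ α₃))
          ((Nat.gcd_dvd_right d13 d23).trans (Nat.gcd_dvd_left α₂ α₃)))
        (Nat.gcd_dvd_left d13 d23)
    have := Nat.eq_one_of_dvd_one (hc1213 ▸ hdvd)
    exact this
  have e₁ : α₁ = a₁' * (d12 * d13) := by
    rw [ha₁']
    exact (Nat.div_mul_cancel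
      (Nat.Coprime.mul_dvd_of_dvd_of_dvd hc1213 (Nat.gcd_dvd_left α₁ α₂)
        (Nat.gcd_dvd_left α₁ α₃))).symm
  have e₂ : α₂ = a₂' * (d12 * d23) := by
    rw [ha₂']
    exact (Nat.div_mul_cancel
      (Nat.Coprime.mul_dvd_of_dvd_of_dvd hc1223 (Nat.gcd_dvd_right α₁ α₂)
        (Nat.gcd_dvd_left α₂ α₃))).symm
  have e₃ : α₃ = a₃' * (d13 * d23) := by
    rw [ha₃']
    exact (Nat.div_mul_cancel
      (Nat.Coprime.mul_dvd_of_dvd_of_dvd hc1323 (Nat.gcd_dvd_right α₁ α₃)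
        (Nat.gcd_dvd_right α₂ α₃))).symm
  have hd23pos : 0 < d23 := Nat.gcd_pos_of_pos_left _ h₂
  have ha1pos : 0 < a₁' := by
    rcases Nat.eq_zero_or_pos a₁' with h | h
    · simp [h] at e₁; omega
    · exact h
  have ha2pos : 0 < a₂' := by
    rcases Nat.eq_zero_or_pos a₂' with h | h
    · simp [h] at e₂; omega
    · exact h
  have ha3pos : 0 < a₃' := by
    rcases Nat.eq_zero_or_pos a₃' with h | h
    · simp [h] at e₃; omega
    · exact h
  -- key coprimality: a₂'*d12 and a₃'*d13 are coprime
  have hkey : Nat.Coprime (a₂' * d12) (a₃' * d13) := by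
    have h2' : α₂ / d23 = a₂' * d12 := by
      rw [e₂]; rw [show a₂' * (d12 * d23) = a₂' * d12 * d23 by ring]
      exact Nat.mul_div_cancel _ hd23pos
    have h3' : α₃ / d23 = a₃' * d13 := by
      rw [e₃]; rw [show a₃' * (d13 * d23) = a₃' * d13 * d23 by ring]
      exact Nat.mul_div_cancel _ hd23pos
    have := Nat.coprime_div_gcd_div_gcd (Nat.gcd_pos_of_pos_left α₃ h₂)
    rwa [← hd23, h2', h3'] at this
  have hDpos : 0 < d12 * d13 * d23 :=
    Nat.mul_pos (Nat.mul_pos (by omega) (by omega)) hd23pos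
  have hD : α₁ * α₂ + α₁ * α₃ + α₂ * α₃ = d12 * d13 * d23 * κ := by
    rw [e₁, e₂, e₃, hκ]; ring
  -- from hA: κ ∣ P1 with P1 = d13*κ + a₂'²*d12*d23
  have hP1 : (α₁ + α₂) * (α₂ + α₃) * d13
      = d12 * d13 * d23 * (d13 * κ + a₂' * a₂' * (d12 * d23)) := by
    rw [e₁, e₂, e₃, hκ]; ring
  have hκP1 : κ ∣ d13 * κ + a₂' * a₂' * (d12 * d23) := by
    have := hA
    rw [hD, hP1] at this
    exact (mul_dvd_mul_iff_left hDpos.ne').mp this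
  have hκ1 : κ ∣ a₂' * a₂' * d12 * d23 := by
    have := (Nat.dvd_add_right (dvd_mul_left κ d13)).mp hκP1
    rwa [← mul_assoc] at this
  have hP2 : (α₁ + α₃) * (α₂ + α₃) * d12
      = d12 * d13 * d23 * (d12 * κ + a₃' * a₃' * (d13 * d23)) := by
    rw [e₁, e₂, e₃, hκ]; ring
  have hκP2 : κ ∣ d12 * κ + a₃' * a₃' * (d13 * d23) := by
    have := hB
    rw [hD, hP2] at this
    exact (mul_dvd_mul_iff_left hDpos.ne').mp this
  have hκ2 : κ ∣ a₃' * a₃' * d13 * d23 := by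
    have := (Nat.dvd_add_right (dvd_mul_left κ d12)).mp hκP2
    rwa [← mul_assoc] at this
  -- coprimality of the cofactors
  have hcXY : Nat.Coprime (a₂' * a₂' * d12) (a₃' * a₃' * d13) := by
    have hsq : Nat.Coprime ((a₂' * d12) * (a₂' * d12)) ((a₃' * d13) * (a₃' * d13)) :=
      Nat.Coprime.mul (hkey.mul_right hkey) (hkey.mul_right hkey)
    exact Nat.Coprime.coprime_dvd_right ⟨d13, by ring⟩
      (Nat.Coprime.coprime_dvd_left ⟨d12, by ring⟩ hsq)
  have hκd23 : κ ∣ d23 := by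
    have hg : κ ∣ Nat.gcd (a₂' * a₂' * d12 * d23) (a₃' * a₃' * d13 * d23) :=
      Nat.dvd_gcd hκ1 hκ2
    rwa [Nat.gcd_mul_right, hcXY, one_mul] at hg
  have hκle : κ ≤ d23 := Nat.le_of_dvd hd23pos hκd23
  have : d23 < κ := by
    rw [hκ]
    have h1 : 1 ≤ a₁' * a₂' * d12 := by
      apply Nat.one_le_iff_ne_zero.mpr
      simp only [Nat.mul_ne_zero_iff]
      omega
    have h2 : d23 ≤ a₂' * a₃' * d23 :=
      Nat.le_mul_of_pos_left d23 (Nat.mul_pos ha2pos ha3pos)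
    omega
  omega
end

section
/- Let m be odd and let Γ < U(2) be the group of order 2m consisting of the scalars ω^{4j} and the matrices ω^{4j+1}·b for 0 ≤ j ≤ m−1, where ω is a primitive 4m-th root of unity and b=[[0,1],[-1,0]]. Then Γ contains exactly one pseudoreflection, and it has order 2. -/
/-!
For a 2×2 matrix `M`, `rank (M - 1) = 1` means `M ≠ 1` and `det (M - 1) = 0`. A scalar `c • 1`
fails this, since `det (c • 1 - 1) = (c - 1)²`. For `λ • b` one has `det (λ • b - 1) = λ² + 1`,
so `λ • b` is a pseudoreflection iff `λ² = -1`, and then `(λ • b)² = λ² b² = 1`. Since `ω` has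
order `4m`, `(ω ^ (4j+1))² = -1` iff `4j + 1 ≡ m [MOD 2m]`, which for odd `m` has exactly one
solution `j < m`: cancelling, `4j ≡ 4j' [MOD 2m]` forces `j ≡ j' [MOD m]`.
-/

open Matrix

noncomputable def bMat : Matrix (Fin 2) (Fin 2) ℂ := !![0, 1; -1, 0]

/-- A pseudoreflection in U(2): a non-identity matrix fixing a complex line pointwise. -/
def IsPseudoreflection (M : Matrix (Fin 2) (Fin 2) ℂ) : Prop := (M - 1).rank = 1

namespace Matrix

variable {m n K : Type*} [Field K] [Fintype n]

theorem rank_eq_zero_iff [Finite m] [DecidableEq n] (M : Matrix m n K) : M.rank = 0 ↔ M = 0 := by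
  rw [rank, Submodule.finrank_eq_zero, LinearMap.range_eq_bot, ← toLin'_apply',
    LinearEquiv.map_eq_zero_iff]

theorem rank_lt_card_iff_det_eq_zero [DecidableEq n] (M : Matrix n n K) :
    M.rank < Fintype.card n ↔ M.det = 0 := by
  refine ⟨fun h => by_contra fun hdet => h.ne (rank_of_det_ne_zero hdet), fun h => ?_⟩
  obtain ⟨v, hv, hMv⟩ := exists_mulVec_eq_zero_iff.2 h
  have hker : Module.finrank K (LinearMap.ker M.mulVecLin) ≠ 0 := by
    rw [Ne, Submodule.finrank_eq_zero, ← Ne, Submodule.ne_bot_iff]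
    exact ⟨v, hMv, hv⟩
  have := LinearMap.finrank_range_add_finrank_ker M.mulVecLin
  rw [Module.finrank_fintype_fun_eq_card] at this
  rw [rank]
  omega

theorem rank_eq_one_iff_of_fin_two (M : Matrix (Fin 2) (Fin 2) K) :
    M.rank = 1 ↔ M ≠ 0 ∧ M.det = 0 := by
  rw [ne_eq, ← rank_eq_zero_iff, ← rank_lt_card_iff_det_eq_zero, Fintype.card_fin]
  have := M.rank_le_card_width
  rw [Fintype.card_fin] at this
  omega

end Matrix

theorem Nat.existsUnique_lt_four_mul_add_one_modEq {m : ℕ} (hm : Odd m) :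
    ∃! j, j < m ∧ 4 * j + 1 ≡ m [MOD 2 * m] := by
  refine existsUnique_of_exists_of_unique ?_ fun j j' ⟨hj, hjm⟩ ⟨hj', hj'm⟩ => ?_
  · have hm4 : m % 4 = 1 ∨ m % 4 = 3 := by
      obtain ⟨k, rfl⟩ := hm
      omega
    rcases hm4 with h | h
    · exact ⟨(m - 1) / 4, by omega, by rw [show 4 * ((m - 1) / 4) + 1 = m by omega]⟩
    · refine ⟨(3 * m - 1) / 4, by omega, ?_⟩
      rw [show 4 * ((3 * m - 1) / 4) + 1 = m + 2 * m by omega]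
      simp [Nat.ModEq]
  · have h4 : 2 * (2 * j) ≡ 2 * (2 * j') [MOD 2 * m] := by
      rw [← mul_assoc, ← mul_assoc]
      exact (hjm.trans hj'm.symm).add_right_cancel' 1
    have h1 : j ≡ j' [MOD m] :=
      Nat.ModEq.cancel_left_of_coprime hm.coprime_two_right (h4.mul_left_cancel' two_ne_zero)
    exact h1.eq_of_lt_of_lt hj hj'

theorem IsPrimitiveRoot.pow_eq_neg_one_iff {R : Type*} [CommRing R] [IsDomain R] {ζ : R}
    {n : ℕ} (hn : 0 < n) (hζ : IsPrimitiveRoot ζ (2 * n)) (a : ℕ) :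
    ζ ^ a = -1 ↔ a ≡ n [MOD 2 * n] := by
  have hζn : ζ ^ n = -1 := by
    have := hζ.pow_of_dvd hn.ne' (dvd_mul_left n 2)
    rw [Nat.mul_div_cancel 2 hn] at this
    exact this.eq_neg_one_of_two_right
  rw [← hζn, (hζ.isOfFinOrder (by omega)).pow_eq_pow_iff_modEq, ← hζ.eq_orderOf]

theorem IsPrimitiveRoot.existsUnique_lt_sq_pow_four_mul_add_one_eq_neg_one
    {R : Type*} [CommRing R] [IsDomain R] {ω : R} {m : ℕ} (hm : Odd m)
    (hω : IsPrimitiveRoot ω (4 * m)) :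
    ∃! j, j < m ∧ (ω ^ (4 * j + 1)) ^ 2 = -1 := by
  rw [show 4 * m = 2 * (2 * m) by ring] at hω
  have hsq (j : ℕ) : (ω ^ (4 * j + 1)) ^ 2 = -1 ↔ 4 * j + 1 ≡ m [MOD 2 * m] := by
    rw [← pow_mul, mul_comm, hω.pow_eq_neg_one_iff (Nat.mul_pos two_pos hm.pos),
      Nat.ModEq.mul_left_cancel_iff' two_ne_zero]
  simp_rw [hsq]
  exact Nat.existsUnique_lt_four_mul_add_one_modEq hm

theorem isPseudoreflection_iff (M : Matrix (Fin 2) (Fin 2) ℂ) :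
    IsPseudoreflection M ↔ M ≠ 1 ∧ (M - 1).det = 0 := by
  rw [IsPseudoreflection, Matrix.rank_eq_one_iff_of_fin_two, sub_ne_zero]

theorem not_isPseudoreflection_smul_one (c : ℂ) :
    ¬ IsPseudoreflection (c • (1 : Matrix (Fin 2) (Fin 2) ℂ)) := by
  rw [isPseudoreflection_iff]
  rintro ⟨hne, hdet⟩
  have hsub : c • (1 : Matrix (Fin 2) (Fin 2) ℂ) - 1 = (c - 1) • 1 := by rw [sub_smul, one_smul]
  rw [hsub, det_smul, det_one, Fintype.card_fin, mul_one, pow_eq_zero_iff two_ne_zero,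
    sub_eq_zero] at hdet
  exact hne (by rw [hdet, one_smul])

theorem isPseudoreflection_smul_bMat_iff (c : ℂ) :
    IsPseudoreflection (c • bMat) ↔ c ^ 2 = -1 := by
  have hdet : (c • bMat - 1).det = c ^ 2 + 1 := by
    simp [bMat, det_fin_two]
    ring
  have hne : c • bMat ≠ 1 := fun h => by simpa [bMat] using congrFun (congrFun h 0) 0
  rw [isPseudoreflection_iff, hdet, add_eq_zero_iff_eq_neg]
  exact and_iff_right hne

theorem orderOf_smul_bMat {c : ℂ} (hc : c ^ 2 = -1) : orderOf (c • bMat) = 2 := by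
  have hb : bMat ^ 2 = -1 := by
    ext i j; fin_cases i <;> fin_cases j <;> simp [bMat, sq]
  have : Fact (Nat.Prime 2) := ⟨Nat.prime_two⟩
  refine orderOf_eq_prime ?_ fun h => by simpa [bMat] using congrFun (congrFun h 0) 0
  rw [smul_pow, hc, hb, neg_smul, one_smul, neg_neg]

theorem stmt_16_general (m : ℕ) (hodd : Odd m) (ω : ℂ)
    (hω : IsPrimitiveRoot ω (4 * m))
    (Γ : Set (Matrix (Fin 2) (Fin 2) ℂ))
    (hΓ : Γ = {M | (∃ j < m, M = ω ^ (4 * j) • (1 : Matrix (Fin 2) (Fin 2) ℂ)) ∨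
      (∃ j < m, M = ω ^ (4 * j + 1) • bMat)}) :
    (∃! u : Matrix (Fin 2) (Fin 2) ℂ, u ∈ Γ ∧ IsPseudoreflection u) ∧
    (∀ u ∈ Γ, IsPseudoreflection u → orderOf u = 2) := by
  subst hΓ
  obtain ⟨j₀, ⟨hj₀, hsq⟩, huniq⟩ :=
    hω.existsUnique_lt_sq_pow_four_mul_add_one_eq_neg_one hodd
  refine ⟨⟨ω ^ (4 * j₀ + 1) • bMat,
    ⟨Or.inr ⟨j₀, hj₀, rfl⟩, (isPseudoreflection_smul_bMat_iff _).2 hsq⟩, ?_⟩, ?_⟩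
  · rintro _ ⟨⟨j, -, rfl⟩ | ⟨j, hj, rfl⟩, hpr⟩
    · exact absurd hpr (not_isPseudoreflection_smul_one _)
    · rw [huniq j ⟨hj, (isPseudoreflection_smul_bMat_iff _).1 hpr⟩]
  · rintro _ (⟨j, -, rfl⟩ | ⟨j, -, rfl⟩) hpr
    · exact absurd hpr (not_isPseudoreflection_smul_one _)
    · exact orderOf_smul_bMat ((isPseudoreflection_smul_bMat_iff _).1 hpr)

/-- For m odd and ω a primitive 4m-th root of unity, the group of order 2m consisting of
the scalars ω^{4j} and the matrices ω^{4j+1}·b (0 ≤ j ≤ m-1) contains exactly one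
pseudoreflection, which has order 2. -/
theorem stmt_16 (m : ℕ) (hm : 0 < m) (hodd : Odd m) (ω : ℂ)
    (hω : IsPrimitiveRoot ω (4 * m))
    (Γ : Set (Matrix (Fin 2) (Fin 2) ℂ))
    (hΓ : Γ = {M | (∃ j < m, M = ω ^ (4 * j) • (1 : Matrix (Fin 2) (Fin 2) ℂ)) ∨
      (∃ j < m, M = ω ^ (4 * j + 1) • bMat)}) :
    (∃! u : Matrix (Fin 2) (Fin 2) ℂ, u ∈ Γ ∧ IsPseudoreflection u) ∧
    (∀ u ∈ Γ, IsPseudoreflection u → orderOf u = 2) :=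
  stmt_16_general m hodd ω hω Γ hΓ
end

section
/- Let m be odd, ω a primitive 4m-th root of unity, and Γ < U(2) the Type IV group of order 8m generated by the Type II group (elements ω^{2j}·bᵏ) together with ω·diag(i,−i). Then Γ contains exactly four pseudoreflections, namely diag(−1,1), diag(1,−1), [[0,−1],[−1,0]], and [[0,1],[1,0]], each of order 2, so γ₀(Γ)/γ₂(Γ) = 1. -/
open Matrix Complex

lemma rank_one_iff (A : Matrix (Fin 2) (Fin 2) ℂ) :
    A.rank = 1 ↔ A ≠ 0 ∧ A.det = 0 := by
  have hrn : A.rank + Module.finrank ℂ (LinearMap.ker A.mulVecLin) = 2 := by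
    have := LinearMap.finrank_range_add_finrank_ker A.mulVecLin
    simpa [Matrix.rank] using this
  have hzero : A.rank = 0 → A = 0 := by
    intro h0
    have : LinearMap.range A.mulVecLin = ⊥ := Submodule.finrank_eq_zero.mp h0
    have hm : A.mulVecLin = 0 := LinearMap.range_eq_bot.mp this
    ext i j
    have := congrFun (congrArg DFunLike.coe hm) (Pi.single j 1)
    have := congrFun this i
    simpa [Matrix.mulVecLin_apply, Matrix.mulVec_single_one] using this
  constructor
  · intro h
    refine ⟨?_, ?_⟩
    · rintro rfl
      rw [Matrix.rank, Matrix.mulVecLin_zero, LinearMap.range_zero, finrank_bot] at h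
      exact one_ne_zero h.symm
    · rw [← Matrix.exists_mulVec_eq_zero_iff]
      have hk : Module.finrank ℂ (LinearMap.ker A.mulVecLin) = 1 := by omega
      have hne : LinearMap.ker A.mulVecLin ≠ ⊥ := by
        intro hb; rw [hb] at hk; simp at hk
      obtain ⟨v, hv, hv0⟩ := Submodule.exists_mem_ne_zero_of_ne_bot hne
      exact ⟨v, hv0, hv⟩
  · rintro ⟨hA, hd⟩
    obtain ⟨v, hv0, hv⟩ := Matrix.exists_mulVec_eq_zero_iff.mpr hd
    have hk : Module.finrank ℂ (LinearMap.ker A.mulVecLin) ≠ 0 := by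
      intro h0
      rw [Submodule.finrank_eq_zero] at h0
      exact hv0 (by simpa [h0] using (LinearMap.mem_ker.mpr (by simpa using hv) :
        v ∈ LinearMap.ker A.mulVecLin))
    have hr0 : A.rank ≠ 0 := fun h => hA (hzero h)
    omega

lemma smul_fin2 (e a b c d : ℂ) : e • !![a,b;c,d] = !![e*a, e*b; e*c, e*d] := by
  ext i j; fin_cases i <;> fin_cases j <;> simp

lemma sub_one_fin2 (a b c d : ℂ) : !![a,b;c,d] - 1 = !![a-1,b;c,d-1] := by
  rw [Matrix.one_fin_two]
  ext i j; fin_cases i <;> fin_cases j <;> simp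

lemma ne_fin2a (a b c d a' b' c' d' : ℂ) (h : a ≠ a') : !![a,b;c,d] ≠ !![a',b';c',d'] := by
  intro he; exact h (congrFun (congrFun he 0) 0)

lemma ne_fin2b (a b c d a' b' c' d' : ℂ) (h : b ≠ b') : !![a,b;c,d] ≠ !![a',b';c',d'] := by
  intro he; exact h (congrFun (congrFun he 0) 1)

lemma ne_zero_fin2a (a b c d : ℂ) (h : a ≠ 0) : !![a,b;c,d] ≠ 0 := by
  intro he; exact h (congrFun (congrFun he 0) 0)

lemma ne_zero_fin2b (a b c d : ℂ) (h : b ≠ 0) : !![a,b;c,d] ≠ 0 := by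
  intro he; exact h (congrFun (congrFun he 0) 1)

lemma ne_zero_fin2d (a b c d : ℂ) (h : d ≠ 0) : !![a,b;c,d] ≠ 0 := by
  intro he; exact h (congrFun (congrFun he 1) 1)

lemma ne_fin2d (a b c d a' b' c' d' : ℂ) (h : d ≠ d') : !![a,b;c,d] ≠ !![a',b';c',d'] := by
  intro he; exact h (congrFun (congrFun he 1) 1)

lemma eq_zero_fin2 : !![(0:ℂ),0;0,0] = 0 := by
  ext i j; fin_cases i <;> fin_cases j <;> simp

lemma b2 : bMat ^ 2 = !![-1,0;0,-1] := by
  rw [pow_two, bMat]; norm_num [Matrix.mul_fin_two]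

lemma b3 : bMat ^ 3 = !![0,-1;1,0] := by
  rw [pow_succ, b2, bMat]; norm_num [Matrix.mul_fin_two]

lemma b4 : bMat ^ 4 = 1 := by
  rw [pow_succ, b3, bMat, Matrix.one_fin_two]; norm_num [Matrix.mul_fin_two]

lemma hbmod (k : ℕ) : bMat ^ k = bMat ^ (k % 4) := by
  conv_lhs => rw [← Nat.div_add_mod k 4]
  rw [pow_add, pow_mul, b4, one_pow, one_mul]

/-- For m odd and ω a primitive 4m-th root of unity, the Type IV group of order 8m
generated by the Type II group (elements ω^{2j}·bᵏ) and ω·diag(i,−i) contains exactly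
four pseudoreflections, diag(−1,1), diag(1,−1), [[0,−1],[−1,0]], [[0,1],[1,0]], each of
order 2; consequently γ₀(Γ)/γ₂(Γ) = 1. -/
theorem stmt_18 (m : ℕ) (hm : 0 < m) (hodd : Odd m) (ω : ℂ)
    (hω : IsPrimitiveRoot ω (4 * m))
    (Γ : Set (Matrix (Fin 2) (Fin 2) ℂ))
    (hΓ : Γ = {M | ∃ j k : ℕ, M = ω ^ (2 * j) • bMat ^ k ∨
      M = ω ^ (2 * j + 1) • (!![I, 0; 0, -I] * bMat ^ k)}) :
    ({u ∈ Γ | IsPseudoreflection u} =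
      {!![-1, 0; 0, 1], !![1, 0; 0, -1], !![0, -1; -1, 0], !![0, 1; 1, 0]}) ∧
    (∀ u ∈ Γ, IsPseudoreflection u → orderOf u = 2) ∧
    (1 / (8 * (m : ℚ))) /
      ((1 / (12 * (8 * (m : ℚ)))) * (4 * ((2 : ℚ) ^ 2 - 1))) = 1 := by
  have hIsq : (I:ℂ)^2 = -1 := Complex.I_sq
  have hω2m : ω ^ (2 * m) = -1 := by
    have h1 : ω ^ (2*m) * ω ^ (2*m) = 1 := by
      rw [← pow_add, show 2*m + 2*m = 4*m by ring, hω.pow_eq_one]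
    rcases mul_self_eq_one_iff.mp h1 with h | h
    · exact absurd h (hω.pow_ne_one_of_pos_of_lt (by omega) (by omega))
    · exact h
  have hI2 : ∀ d : ℂ, d ^ 2 = -1 → d = I ∨ d = -I := by
    intro d hd
    have h0 : (d + I) * (d - I) = 0 := by
      rw [← sq_sub_sq, hd, hIsq]; ring
    rcases mul_eq_zero.mp h0 with h | h
    · right; linear_combination h
    · left; linear_combination h
  have hcsq : ∀ j : ℕ, (ω ^ (2*j)) ^ 2 ≠ -1 := by
    intro j hc
    have h1 : (ω ^ (2*j)) ^ (2*m) = 1 := by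
      rw [← pow_mul, show 2*j*(2*m) = 4*m*j by ring, pow_mul, hω.pow_eq_one, one_pow]
    rw [pow_mul, hc, hodd.neg_one_pow] at h1
    norm_num at h1
  obtain ⟨t, ht⟩ := hodd
  have hJ : ∃ jI jN : ℕ, ω ^ (2*jI+1) = I ∧ ω ^ (2*jN+1) = -I := by
    have hu : (ω ^ m) ^ 2 = -1 := by rw [← pow_mul, show m*2 = 2*m by ring, hω2m]
    have h3m : ω ^ (3*m) = - ω ^ m := by
      rw [show 3*m = 2*m + m by ring, pow_add, hω2m]; ring
    rcases hI2 _ hu with h | h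
    · refine ⟨t, 3*t+1, ?_, ?_⟩
      · rw [show 2*t+1 = m by omega]; exact h
      · rw [show 2*(3*t+1)+1 = 3*m by omega, h3m, h]
    · refine ⟨3*t+1, t, ?_, ?_⟩
      · rw [show 2*(3*t+1)+1 = 3*m by omega, h3m, h]; ring
      · rw [show 2*t+1 = m by omega]; exact h
  obtain ⟨jI, jN, hjI, hjN⟩ := hJ
  have hAB1 : !![I, 0; 0, -I] * bMat = !![0, I; I, 0] := by
    rw [bMat]; norm_num [Matrix.mul_fin_two]
  have hAB2 : !![I, 0; 0, -I] * bMat ^ 2 = !![-I, 0; 0, I] := by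
    rw [b2]; norm_num [Matrix.mul_fin_two]
  have hAB3 : !![I, 0; 0, -I] * bMat ^ 3 = !![0, -I; -I, 0] := by
    rw [b3]; norm_num [Matrix.mul_fin_two]
  have hset : ({u ∈ Γ | IsPseudoreflection u} =
      {!![-1, 0; 0, 1], !![1, 0; 0, -1], !![0, -1; -1, 0], !![0, 1; 1, 0]}) := by
    ext u
    simp only [Set.mem_setOf_eq, Set.mem_sep_iff, Set.mem_insert_iff,
      Set.mem_singleton_iff, hΓ]
    constructor
    · rintro ⟨⟨j, k, hu | hu⟩, hpr⟩
      · -- Type II part: no pseudoreflections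
        exfalso
        set c := ω ^ (2*j) with hc
        rw [hbmod k] at hu
        have h4 : k % 4 < 4 := Nat.mod_lt _ (by norm_num)
        set r := k % 4 with hr
        clear_value r
        interval_cases r
        · rw [pow_zero, Matrix.one_fin_two, smul_fin2] at hu
          simp only [mul_one, mul_zero] at hu
          rw [IsPseudoreflection, hu, sub_one_fin2, rank_one_iff] at hpr
          obtain ⟨hne, hdet⟩ := hpr
          rw [Matrix.det_fin_two_of] at hdet
          have hc1 : c - 1 = 0 := mul_self_eq_zero.mp (by linear_combination hdet)
          apply hne
          rw [show c - 1 = 0 from hc1]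
          exact eq_zero_fin2
        · rw [pow_one, bMat, smul_fin2] at hu
          simp only [mul_one, mul_zero, mul_neg] at hu
          rw [IsPseudoreflection, hu, sub_one_fin2, rank_one_iff] at hpr
          obtain ⟨hne, hdet⟩ := hpr
          rw [Matrix.det_fin_two_of] at hdet
          exact hcsq j (by linear_combination hdet)
        · rw [b2, smul_fin2] at hu
          simp only [mul_one, mul_zero, mul_neg] at hu
          rw [IsPseudoreflection, hu, sub_one_fin2, rank_one_iff] at hpr
          obtain ⟨hne, hdet⟩ := hpr
          rw [Matrix.det_fin_two_of] at hdet
          have hc1 : c + 1 = 0 := mul_self_eq_zero.mp (by linear_combination hdet)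
          apply hne
          rw [show -c - 1 = (0:ℂ) by linear_combination -hc1]
          exact eq_zero_fin2
        · rw [b3, smul_fin2] at hu
          simp only [mul_one, mul_zero, mul_neg] at hu
          rw [IsPseudoreflection, hu, sub_one_fin2, rank_one_iff] at hpr
          obtain ⟨hne, hdet⟩ := hpr
          rw [Matrix.det_fin_two_of] at hdet
          exact hcsq j (by linear_combination hdet)
      · -- Type IV coset
        set d := ω ^ (2*j+1) with hd
        rw [hbmod k] at hu
        have h4 : k % 4 < 4 := Nat.mod_lt _ (by norm_num)
        set r := k % 4 with hr
        clear_value r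
        interval_cases r
        · rw [pow_zero, mul_one, smul_fin2] at hu
          simp only [mul_zero, mul_neg] at hu
          rw [IsPseudoreflection, hu, sub_one_fin2, rank_one_iff] at hpr
          obtain ⟨hne, hdet⟩ := hpr
          rw [Matrix.det_fin_two_of] at hdet
          have hd2 : d ^ 2 = -1 := by linear_combination hdet + d^2 * hIsq
          rcases hI2 d hd2 with h | h
          · left; rw [hu, h]
            norm_num [Complex.I_mul_I]
          · right; left; rw [hu, h]
            norm_num [Complex.I_mul_I]
        · rw [pow_one, hAB1, smul_fin2] at hu
          simp only [mul_zero] at hu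
          rw [IsPseudoreflection, hu, sub_one_fin2, rank_one_iff] at hpr
          obtain ⟨hne, hdet⟩ := hpr
          rw [Matrix.det_fin_two_of] at hdet
          have hd2 : d ^ 2 = -1 := by linear_combination hdet + d^2 * hIsq
          rcases hI2 d hd2 with h | h
          · right; right; left; rw [hu, h]
            norm_num [Complex.I_mul_I]
          · right; right; right; rw [hu, h]
            norm_num [Complex.I_mul_I]
        · rw [hAB2, smul_fin2] at hu
          simp only [mul_zero, mul_neg] at hu
          rw [IsPseudoreflection, hu, sub_one_fin2, rank_one_iff] at hpr
          obtain ⟨hne, hdet⟩ := hpr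
          rw [Matrix.det_fin_two_of] at hdet
          have hd2 : d ^ 2 = -1 := by linear_combination hdet + d^2 * hIsq
          rcases hI2 d hd2 with h | h
          · right; left; rw [hu, h]
            norm_num [Complex.I_mul_I]
          · left; rw [hu, h]
            norm_num [Complex.I_mul_I]
        · rw [hAB3, smul_fin2] at hu
          simp only [mul_zero, mul_neg] at hu
          rw [IsPseudoreflection, hu, sub_one_fin2, rank_one_iff] at hpr
          obtain ⟨hne, hdet⟩ := hpr
          rw [Matrix.det_fin_two_of] at hdet
          have hd2 : d ^ 2 = -1 := by linear_combination hdet + d^2 * hIsq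
          rcases hI2 d hd2 with h | h
          · right; right; right; rw [hu, h]
            norm_num [Complex.I_mul_I]
          · right; right; left; rw [hu, h]
            norm_num [Complex.I_mul_I]
    · rintro (rfl | rfl | rfl | rfl)
      · refine ⟨⟨jI, 0, Or.inr ?_⟩, ?_⟩
        · rw [pow_zero, mul_one, hjI, smul_fin2]
          norm_num [Complex.I_mul_I]
        · rw [IsPseudoreflection, sub_one_fin2, rank_one_iff, Matrix.det_fin_two_of]
          exact ⟨ne_zero_fin2a _ _ _ _ (by norm_num), by ring⟩
      · refine ⟨⟨jN, 0, Or.inr ?_⟩, ?_⟩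
        · rw [pow_zero, mul_one, hjN, smul_fin2]
          norm_num [Complex.I_mul_I]
        · rw [IsPseudoreflection, sub_one_fin2, rank_one_iff, Matrix.det_fin_two_of]
          exact ⟨ne_zero_fin2d _ _ _ _ (by norm_num), by ring⟩
      · refine ⟨⟨jI, 1, Or.inr ?_⟩, ?_⟩
        · rw [pow_one, hAB1, hjI, smul_fin2]
          norm_num [Complex.I_mul_I]
        · rw [IsPseudoreflection, sub_one_fin2, rank_one_iff, Matrix.det_fin_two_of]
          exact ⟨ne_zero_fin2b _ _ _ _ (by norm_num), by ring⟩
      · refine ⟨⟨jN, 1, Or.inr ?_⟩, ?_⟩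
        · rw [pow_one, hAB1, hjN, smul_fin2]
          norm_num [Complex.I_mul_I]
        · rw [IsPseudoreflection, sub_one_fin2, rank_one_iff, Matrix.det_fin_two_of]
          exact ⟨ne_zero_fin2b _ _ _ _ (by norm_num), by ring⟩
  refine ⟨hset, ?_, ?_⟩
  · intro u hu hpr
    have hmem : u ∈ ({!![-1, 0; 0, 1], !![1, 0; 0, -1], !![0, -1; -1, 0], !![0, 1; 1, 0]} :
        Set (Matrix (Fin 2) (Fin 2) ℂ)) := by
      rw [← hset]; exact ⟨hu, hpr⟩
    simp only [Set.mem_insert_iff, Set.mem_singleton_iff] at hmem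
    have h1 : (1 : Matrix (Fin 2) (Fin 2) ℂ) = !![1,0;0,1] := Matrix.one_fin_two
    rcases hmem with rfl | rfl | rfl | rfl
    · refine orderOf_eq_prime ?_ ?_
      · rw [pow_two, h1]; norm_num [Matrix.mul_fin_two]
      · rw [h1]; exact ne_fin2a _ _ _ _ _ _ _ _ (by norm_num)
    · refine orderOf_eq_prime ?_ ?_
      · rw [pow_two, h1]; norm_num [Matrix.mul_fin_two]
      · rw [h1]; exact ne_fin2d _ _ _ _ _ _ _ _ (by norm_num)
    · refine orderOf_eq_prime ?_ ?_
      · rw [pow_two, h1]; norm_num [Matrix.mul_fin_two]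
      · rw [h1]; exact ne_fin2a _ _ _ _ _ _ _ _ (by norm_num)
    · refine orderOf_eq_prime ?_ ?_
      · rw [pow_two, h1]; norm_num [Matrix.mul_fin_two]
      · rw [h1]; exact ne_fin2a _ _ _ _ _ _ _ _ (by norm_num)
  · have hm' : (m:ℚ) ≠ 0 := by positivity
    field_simp
    ring
end

section
/- Let ℓ ≥ 1 and let Γ < U(2) consist of the 2ℓ elements diag(ω,ω⁻¹)ʲ and i·b·diag(ω,ω⁻¹)ʲ for 0 ≤ j ≤ ℓ−1, where ω is a primitive ℓ-th root of unity and b=[[0,1],[-1,0]]. Then the polynomials w₁w₂, w̄₁w̄₂, and w₁w̄₁ + w₂w̄₂ are Γ-invariant; in particular the space of Γ-invariant quadratics has dimension at least 3. -/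
open MvPolynomial Matrix Complex

/-- The action of `u ∈ U(2)` on polynomials in the coordinates (w₁, w₂, w̄₁, w̄₂):
`u` acts as diag(u, conj u). -/
noncomputable def act (u : Matrix (Fin 2) (Fin 2) ℂ) :
    (Fin 2 ⊕ Fin 2) → MvPolynomial (Fin 2 ⊕ Fin 2) ℂ
  | Sum.inl i => ∑ j, C (u i j) * X (Sum.inl j)
  | Sum.inr i => ∑ j, C ((starRingEnd ℂ) (u i j)) * X (Sum.inr j)

open ComplexConjugate

/-! Both generators `diag(ω, ω̄)` and `i·b = [[0, i], [ī, 0]]` of `Γ` fix the three quadratics by a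
direct computation using only `|ω| = |i| = 1`. Since `u ↦ aeval (act u)` reverses products, the
fixed points of the generators are fixed by all of `Γ`. The quadratics are linearly independent
(evaluate at three points), so the invariant quadratics have dimension at least `3`. -/

theorem aeval_act_mul (g h : Matrix (Fin 2) (Fin 2) ℂ) :
    aeval (act (g * h)) = (aeval (act h)).comp (aeval (act g)) := by
  refine MvPolynomial.algHom_ext fun i => ?_
  rcases i with i | i <;> simp [act, Matrix.mul_apply, Fin.sum_univ_two] <;> ring

theorem aeval_act_one : aeval (act 1) = AlgHom.id ℂ (MvPolynomial (Fin 2 ⊕ Fin 2) ℂ) := by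
  refine MvPolynomial.algHom_ext fun i => ?_
  rcases i with i | i <;> fin_cases i <;> simp [act]

theorem aeval_act_pow_of_fixed {g : Matrix (Fin 2) (Fin 2) ℂ}
    {p : MvPolynomial (Fin 2 ⊕ Fin 2) ℂ} (hp : aeval (act g) p = p) (j : ℕ) :
    aeval (act (g ^ j)) p = p := by
  induction j with
  | zero => rw [pow_zero, aeval_act_one, AlgHom.id_apply]
  | succ j ih => rw [pow_succ, aeval_act_mul, AlgHom.comp_apply, ih, hp]

/-- `w₁w₂`, `w̄₁w̄₂` and `w₁w̄₁ + w₂w̄₂`. -/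
noncomputable def quadraticInvariant : Fin 3 → MvPolynomial (Fin 2 ⊕ Fin 2) ℂ :=
  ![X (Sum.inl 0) * X (Sum.inl 1), X (Sum.inr 0) * X (Sum.inr 1),
    X (Sum.inl 0) * X (Sum.inr 0) + X (Sum.inl 1) * X (Sum.inr 1)]

theorem C_mul_C_conj {σ : Type*} {a : ℂ} (ha : ‖a‖ = 1) :
    (C a * C (conj a) : MvPolynomial σ ℂ) = 1 := by
  rw [← C_mul, Complex.mul_conj, Complex.normSq_eq_norm_sq, ha]
  simp

theorem aeval_act_diagonal_quadraticInvariant {a : ℂ} (ha : ‖a‖ = 1) (i : Fin 3) :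
    aeval (act !![a, 0; 0, conj a]) (quadraticInvariant i) = quadraticInvariant i := by
  conv_rhs => rw [← one_mul (quadraticInvariant i), ← C_mul_C_conj ha]
  fin_cases i <;> simp [quadraticInvariant, act, Fin.sum_univ_two] <;> ring

theorem aeval_act_antidiagonal_quadraticInvariant {a : ℂ} (ha : ‖a‖ = 1) (i : Fin 3) :
    aeval (act !![0, a; conj a, 0]) (quadraticInvariant i) = quadraticInvariant i := by
  conv_rhs => rw [← one_mul (quadraticInvariant i), ← C_mul_C_conj ha]
  fin_cases i <;> simp [quadraticInvariant, act, Fin.sum_univ_two] <;> ring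

theorem isHomogeneous_quadraticInvariant (i : Fin 3) :
    (quadraticInvariant i).IsHomogeneous 2 := by
  have hXX (j k : Fin 2 ⊕ Fin 2) : (X j * X k : MvPolynomial (Fin 2 ⊕ Fin 2) ℂ).IsHomogeneous 2 :=
    (isHomogeneous_X ℂ j).mul (isHomogeneous_X ℂ k)
  fin_cases i
  exacts [hXX _ _, hXX _ _, (hXX _ _).add (hXX _ _)]

theorem linearIndependent_quadraticInvariant : LinearIndependent ℂ quadraticInvariant := by
  rw [Fintype.linearIndependent_iff]
  intro c hc
  have h₀ := congrArg (eval (Sum.elim ![1, 1] ![0, 0])) hc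
  have h₁ := congrArg (eval (Sum.elim ![0, 0] ![1, 1])) hc
  have h₂ := congrArg (eval (Sum.elim ![1, 0] ![1, 0])) hc
  simp only [quadraticInvariant, Fin.sum_univ_three, Matrix.cons_val_zero, Matrix.cons_val_one,
    Matrix.cons_val, smul_add, map_add, smul_eval, map_mul, eval_X, Sum.elim_inl, Sum.elim_inr,
    Matrix.cons_val_fin_one, mul_one, mul_zero, add_zero, map_zero, zero_add] at h₀ h₁ h₂
  intro i
  fin_cases i <;> simpa

theorem le_finrank_of_linearIndependent {K V ι : Type*} [DivisionRing K] [AddCommGroup V]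
    [Module K V] [Fintype ι] {S : Submodule K V} [FiniteDimensional K S] {v : ι → V}
    (hv : LinearIndependent K v) (hvS : ∀ i, v i ∈ S) : Fintype.card ι ≤ Module.finrank K S :=
  calc Fintype.card ι = Module.finrank K (Submodule.span K (Set.range v)) :=
        (finrank_span_eq_card hv).symm
    _ ≤ Module.finrank K S :=
        Submodule.finrank_mono (Submodule.span_le.2 (Set.range_subset_iff.2 hvS))

/-- For ℓ ≥ 1, ω a primitive ℓ-th root of unity, and Γ the group consisting of the 2ℓ
elements diag(ω,ω⁻¹)ʲ and i·b·diag(ω,ω⁻¹)ʲ, the polynomials w₁w₂, w̄₁w̄₂, and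
w₁w̄₁ + w₂w̄₂ are Γ-invariant; in particular the Γ-invariant quadratics have
dimension at least 3. -/
theorem stmt_19 (ℓ : ℕ) (hℓ : 1 ≤ ℓ) (ω : ℂ) (hω : IsPrimitiveRoot ω ℓ)
    (A : Matrix (Fin 2) (Fin 2) ℂ) (hA : A = !![ω, 0; 0, ω⁻¹])
    (Γ : Set (Matrix (Fin 2) (Fin 2) ℂ))
    (hΓ : Γ = {M | ∃ j : ℕ, M = A ^ j ∨ M = (I • bMat) * A ^ j}) :
    (∀ g ∈ Γ, ∀ p ∈ ({X (Sum.inl 0) * X (Sum.inl 1),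
        X (Sum.inr 0) * X (Sum.inr 1),
        X (Sum.inl 0) * X (Sum.inr 0) + X (Sum.inl 1) * X (Sum.inr 1)} :
          Set (MvPolynomial (Fin 2 ⊕ Fin 2) ℂ)),
      aeval (act g) p = p) ∧
    3 ≤ Module.finrank ℂ
      ↥((homogeneousSubmodule (Fin 2 ⊕ Fin 2) ℂ 2) ⊓
        ⨅ g ∈ Γ, LinearMap.eqLocus (aeval (act g)).toLinearMap LinearMap.id) := by
  have hω₁ : ‖ω‖ = 1 := hω.norm'_eq_one (by omega)
  have hA' : A = !![ω, 0; 0, conj ω] := by rw [hA, Complex.inv_eq_conj hω₁]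
  have hIb : I • bMat = !![0, I; conj I, 0] := by
    ext i j
    fin_cases i <;> fin_cases j <;> simp [bMat]
  have hfixed : ∀ g ∈ Γ, ∀ i, aeval (act g) (quadraticInvariant i) = quadraticInvariant i := by
    have hAfixed i := aeval_act_pow_of_fixed (hA' ▸ aeval_act_diagonal_quadraticInvariant hω₁ i)
    subst hΓ
    rintro g ⟨j, rfl | rfl⟩ i
    · exact hAfixed i j
    · rw [aeval_act_mul, AlgHom.comp_apply, hIb,
        aeval_act_antidiagonal_quadraticInvariant Complex.norm_I i, hAfixed i j]
  refine ⟨fun g hg p hp => ?_, ?_⟩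
  · rcases hp with rfl | rfl | rfl
    exacts [hfixed g hg 0, hfixed g hg 1, hfixed g hg 2]
  · have : FiniteDimensional ℂ (homogeneousSubmodule (Fin 2 ⊕ Fin 2) ℂ 2) :=
      Module.Finite.iff_fg.mpr (homogeneousSubmodule_fg _ _ 2)
    refine le_finrank_of_linearIndependent (ι := Fin 3) linearIndependent_quadraticInvariant
      fun i => Submodule.mem_inf.2 ⟨?_, ?_⟩
    · exact (mem_homogeneousSubmodule _ _).2 (isHomogeneous_quadraticInvariant i)
    · simp only [Submodule.mem_iInf]
      exact fun g hg => hfixed g hg i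
end
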